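/- Let 0 < q < 1 and let k \ge 1 be an integer. Define \widetilde{\zeta}[k] := \sum_{n=1}^\infty q^{kn}/[n]_q^k and \zeta[j] := \sum_{n=1}^\infty q^{(j-1)n}/[n]_q^j for j \ge 2. Then \widetilde{\zeta}[k] = (q-1)^{k-1}\widetilde{\zeta}[1] + \sum_{j=2}^k (q-1)^{k-j}\zeta[j]. -/

import Mathlib

noncomputable def qnum (q : ℝ) (k : ℕ) : ℝ := (1 - q ^ k) / (1 - q)

noncomputable def qzetaTilde (q : ℝ) (k : ℕ) : ℝ :=
  ∑' n : ℕ+, q ^ (k * (n : ℕ)) / (qnum q n) ^ k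

noncomputable def qz (q : ℝ) (j : ℕ) : ℝ :=
  ∑' n : ℕ+, q ^ ((j - 1) * (n : ℕ)) / (qnum q n) ^ j

/-!
Since `(q - 1) [n]_q = q ^ n - 1`, we have `q ^ n / [n]_q = (q - 1) + 1 / [n]_q`; multiplying by
`q ^ (k n) / [n]_q ^ k` and summing over `n` gives the first-order recursion
`ζ̃[k + 1] = (q - 1) ζ̃[k] + ζ[k + 1]`, which unrolls to the stated formula. All series converge
because `[n]_q ≥ 1`, so each term is dominated by `q ^ n`.
-/

open Finset

theorem eq_pow_mul_add_sum_of_succ_eq {R : Type*} [CommSemiring R] (a b : ℕ → R) (c : R)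
    (h : ∀ k ≥ 1, a (k + 1) = c * a k + b (k + 1)) (k : ℕ) (hk : 1 ≤ k) :
    a k = c ^ (k - 1) * a 1 + ∑ j ∈ Icc 2 k, c ^ (k - j) * b j := by
  induction k, hk using Nat.le_induction with
  | base => simp
  | succ k hk ih =>
    have hpow : ∀ j ∈ Icc 2 k, c * (c ^ (k - j) * b j) = c ^ (k + 1 - j) * b j := by
      intro j hj
      rw [← mul_assoc, ← pow_succ', Nat.sub_add_comm (mem_Icc.mp hj).2]
    rw [h k hk, ih, sum_Icc_succ_top (by omega), Nat.sub_self, pow_zero, one_mul, mul_add,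
      mul_sum, sum_congr rfl hpow, ← mul_assoc, ← pow_succ', Nat.sub_add_cancel hk,
      Nat.add_sub_cancel, add_assoc]

section qAnalogue

variable {q : ℝ}

theorem pow_eq_one_add_sub_one_mul_qnum (hq : q ≠ 1) (n : ℕ) :
    q ^ n = 1 + (q - 1) * qnum q n := by
  have : 1 - q ≠ 0 := sub_ne_zero.mpr hq.symm
  rw [qnum]
  field_simp
  ring

theorem one_le_qnum (hq0 : 0 ≤ q) (hq1 : q < 1) {n : ℕ} (hn : 1 ≤ n) : 1 ≤ qnum q n := by
  have : q ^ n ≤ q := pow_le_of_le_one hq0 hq1.le (by omega)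
  rw [qnum, le_div_iff₀ (by linarith)]
  linarith

theorem summable_pow_mul_div_qnum_pow (hq0 : 0 ≤ q) (hq1 : q < 1) {m : ℕ} (hm : 1 ≤ m)
    (k : ℕ) :
    Summable fun n : ℕ+ => q ^ (m * (n : ℕ)) / qnum q n ^ k := by
  have hgeom : Summable fun n : ℕ+ => q ^ (n : ℕ) :=
    (summable_geometric_of_lt_one hq0 hq1).comp_injective PNat.coe_injective
  refine hgeom.of_nonneg_of_le (fun n => ?_) (fun n => ?_)
  · have := one_le_qnum hq0 hq1 n.pos
    positivity
  · calc q ^ (m * (n : ℕ)) / qnum q n ^ k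
        ≤ q ^ (m * (n : ℕ)) :=
          div_le_self (by positivity) (one_le_pow₀ (one_le_qnum hq0 hq1 n.pos))
      _ ≤ q ^ (n : ℕ) := pow_le_pow_of_le_one hq0 hq1.le (Nat.le_mul_of_pos_left _ hm)

theorem pow_succ_mul_div_qnum_pow_succ (hq : q ≠ 1) (k n : ℕ) (hn : qnum q n ≠ 0) :
    q ^ ((k + 1) * n) / qnum q n ^ (k + 1)
      = (q - 1) * (q ^ (k * n) / qnum q n ^ k) + q ^ (k * n) / qnum q n ^ (k + 1) := by
  rw [add_mul, one_mul, pow_add, pow_eq_one_add_sub_one_mul_qnum hq n]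
  field_simp
  ring

theorem qzetaTilde_succ (hq0 : 0 ≤ q) (hq1 : q < 1) {k : ℕ} (hk : 1 ≤ k) :
    qzetaTilde q (k + 1) = (q - 1) * qzetaTilde q k + qz q (k + 1) := by
  have hterm (n : ℕ+) := pow_succ_mul_div_qnum_pow_succ hq1.ne k n
    (zero_lt_one.trans_le (one_le_qnum hq0 hq1 n.pos)).ne'
  simp only [qzetaTilde, qz, Nat.add_sub_cancel, hterm, ← tsum_mul_left]
  exact ((summable_pow_mul_div_qnum_pow hq0 hq1 hk k).mul_left _).tsum_add
    (summable_pow_mul_div_qnum_pow hq0 hq1 hk (k + 1))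

end qAnalogue

theorem qzetaTilde_telescoped (q : ℝ) (hq0 : 0 < q) (hq1 : q < 1)
    (k : ℕ) (hk : 1 ≤ k) :
    qzetaTilde q k
      = (q - 1) ^ (k - 1) * qzetaTilde q 1
        + ∑ j ∈ Finset.Icc 2 k, (q - 1) ^ (k - j) * qz q j :=
  eq_pow_mul_add_sum_of_succ_eq (qzetaTilde q) (qz q) (q - 1)
    (fun _ hk => qzetaTilde_succ hq0.le hq1 hk) k hk
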